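/- arXiv:1804.04576 — 2 statements merged into one kernel-verified Lean document; each statement's English description precedes it below -/
import Mathlib

section
/- Assume x̂_q ∈ P for all q ∈ {1, …, Q} and let x̄ = (1/Q) Σ_{q=1}^Q x̂_q. Then ρ_A(X̂) = ρ_A({x̄}); and, assuming additionally b_i ≠ 0 for all i, ρ_R(X̂) = ρ_R({x̄}). -/
open Matrix

/-- Feasibility for the absolute duality gap inverse problem `GIO_A(X̂)`,
with normalization norm `‖·‖₁`. -/
def FeasA {m n Q : ℕ} (A : Matrix (Fin m) (Fin n) ℝ) (b : Fin m → ℝ)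
    (xhat : Fin Q → Fin n → ℝ)
    (c : Fin n → ℝ) (y : Fin m → ℝ) (ε : Fin Q → ℝ) : Prop :=
  Aᵀ.mulVec y = c ∧ (∀ i, 0 ≤ y i) ∧ (∀ q, c ⬝ᵥ xhat q = b ⬝ᵥ y + ε q) ∧
    (∑ j, |c j|) = 1

/-- Feasibility for the relative duality gap inverse problem `GIO_R(X̂)`,
with normalization norm `‖·‖₁`, including the convention that `bᵀ y = 0`
forces `ε_q = 1` for all `q`. -/
def FeasR {m n Q : ℕ} (A : Matrix (Fin m) (Fin n) ℝ) (b : Fin m → ℝ)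
    (xhat : Fin Q → Fin n → ℝ)
    (c : Fin n → ℝ) (y : Fin m → ℝ) (ε : Fin Q → ℝ) : Prop :=
  Aᵀ.mulVec y = c ∧ (∀ i, 0 ≤ y i) ∧ (∀ q, c ⬝ᵥ xhat q = ε q * (b ⬝ᵥ y)) ∧
    (∑ j, |c j|) = 1 ∧ (b ⬝ᵥ y = 0 → ∀ q, ε q = 1)

/-- Optimal value of `GIO_A(X̂)`. -/
noncomputable def zA {m n Q : ℕ} (A : Matrix (Fin m) (Fin n) ℝ) (b : Fin m → ℝ)
    (xhat : Fin Q → Fin n → ℝ) : ℝ :=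
  sInf {v : ℝ | ∃ (c : Fin n → ℝ) (y : Fin m → ℝ) (ε : Fin Q → ℝ),
    FeasA A b xhat c y ε ∧ v = ∑ q, |ε q|}

/-- Optimal value of `GIO_R(X̂)`. -/
noncomputable def zR {m n Q : ℕ} (A : Matrix (Fin m) (Fin n) ℝ) (b : Fin m → ℝ)
    (xhat : Fin Q → Fin n → ℝ) : ℝ :=
  sInf {v : ℝ | ∃ (c : Fin n → ℝ) (y : Fin m → ℝ) (ε : Fin Q → ℝ),
    FeasR A b xhat c y ε ∧ v = ∑ q, |ε q - 1|}

/-- The baseline denominator `D_A(X̂)`. -/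
noncomputable def DA {m n Q : ℕ} (A : Matrix (Fin m) (Fin n) ℝ) (b : Fin m → ℝ)
    (xhat : Fin Q → Fin n → ℝ) : ℝ :=
  (m : ℝ)⁻¹ * ∑ i, ∑ q, |A i ⬝ᵥ xhat q - b i| / (∑ j, |A i j|)

/-- The baseline denominator `D_R(X̂)`. -/
noncomputable def DR {m n Q : ℕ} (A : Matrix (Fin m) (Fin n) ℝ) (b : Fin m → ℝ)
    (xhat : Fin Q → Fin n → ℝ) : ℝ :=
  (m : ℝ)⁻¹ * ∑ i, ∑ q, |A i ⬝ᵥ xhat q / b i - 1|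

namespace Stmt16Aux

open Pointwise

variable {m n Q : ℕ} {A : Matrix (Fin m) (Fin n) ℝ} {b : Fin m → ℝ}
  {xhat : Fin Q → Fin n → ℝ} {xbar : Fin n → ℝ}

lemma sum_dot (hQ : 0 < Q) (hxbar : xbar = (Q : ℝ)⁻¹ • ∑ q, xhat q)
    (v : Fin n → ℝ) : ∑ q, v ⬝ᵥ xhat q = (Q : ℝ) * (v ⬝ᵥ xbar) := by
  have hQ' : (Q : ℝ) ≠ 0 := Nat.cast_ne_zero.2 hQ.ne'
  subst hxbar
  simp only [dotProduct, Pi.smul_apply, Finset.sum_apply, smul_eq_mul,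
    Finset.mul_sum]
  rw [Finset.sum_comm]
  refine Finset.sum_congr rfl fun j _ => ?_
  refine Finset.sum_congr rfl fun q _ => ?_
  field_simp

lemma dot_xbar (hQ : 0 < Q) (hxbar : xbar = (Q : ℝ)⁻¹ • ∑ q, xhat q)
    (v : Fin n → ℝ) {t : ℝ} (h : ∀ q, t ≤ v ⬝ᵥ xhat q) : t ≤ v ⬝ᵥ xbar := by
  have hQ' : (0 : ℝ) < (Q : ℝ) := Nat.cast_pos.2 hQ
  have h1 : (Q : ℝ) * t ≤ (Q : ℝ) * (v ⬝ᵥ xbar) := by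
    rw [← sum_dot hQ hxbar v]
    calc (Q : ℝ) * t = ∑ _q : Fin Q, t := by
          simp [Finset.sum_const, Finset.card_univ, mul_comm]
      _ ≤ ∑ q, v ⬝ᵥ xhat q := Finset.sum_le_sum fun q _ => h q
  exact le_of_mul_le_mul_left h1 hQ'

lemma xbar_feas (hQ : 0 < Q) (hxbar : xbar = (Q : ℝ)⁻¹ • ∑ q, xhat q)
    (hfeasX : ∀ q i, b i ≤ A.mulVec (xhat q) i) (i : Fin m) :
    b i ≤ A i ⬝ᵥ xbar :=
  dot_xbar hQ hxbar (A i) fun q => hfeasX q i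

lemma weak_dual {c : Fin n → ℝ} {y : Fin m → ℝ} (hA : Aᵀ.mulVec y = c)
    (hy : ∀ i, 0 ≤ y i) {x : Fin n → ℝ} (hx : ∀ i, b i ≤ A.mulVec x i) :
    b ⬝ᵥ y ≤ c ⬝ᵥ x := by
  have h1 : c ⬝ᵥ x = y ⬝ᵥ A.mulVec x := by
    rw [← hA, Matrix.mulVec_transpose, Matrix.dotProduct_mulVec]
  rw [h1, dotProduct_comm]
  exact Finset.sum_le_sum fun i _ => mul_le_mul_of_nonneg_left (hx i) (hy i)

/-- Key summation identity: sum of distances to a common level `t`. -/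
lemma sum_abs_sub (hQ : 0 < Q) (hxbar : xbar = (Q : ℝ)⁻¹ • ∑ q, xhat q)
    (c : Fin n → ℝ) (t : ℝ) (h : ∀ q, t ≤ c ⬝ᵥ xhat q) :
    ∑ q, |c ⬝ᵥ xhat q - t| = (Q : ℝ) * |c ⬝ᵥ xbar - t| := by
  have hbar : t ≤ c ⬝ᵥ xbar := dot_xbar hQ hxbar c h
  rw [abs_of_nonneg (sub_nonneg.2 hbar)]
  calc ∑ q, |c ⬝ᵥ xhat q - t| = ∑ q, (c ⬝ᵥ xhat q - t) :=
        Finset.sum_congr rfl fun q _ => abs_of_nonneg (sub_nonneg.2 (h q))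
    _ = (∑ q, c ⬝ᵥ xhat q) - (Q : ℝ) * t := by
        rw [Finset.sum_sub_distrib]
        simp [Finset.sum_const, Finset.card_univ, mul_comm]
    _ = (Q : ℝ) * (c ⬝ᵥ xbar) - (Q : ℝ) * t := by rw [sum_dot hQ hxbar c]
    _ = (Q : ℝ) * (c ⬝ᵥ xbar - t) := by ring

lemma zA_scale (hQ : 0 < Q) (hxbar : xbar = (Q : ℝ)⁻¹ • ∑ q, xhat q)
    (hfeasX : ∀ q i, b i ≤ A.mulVec (xhat q) i) :
    zA A b xhat = (Q : ℝ) * zA A b (fun _ : Fin 1 => xbar) := by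
  have key : {v : ℝ | ∃ c y ε, FeasA A b xhat c y ε ∧ v = ∑ q, |ε q|}
      = (Q : ℝ) • {v : ℝ | ∃ c y ε,
          FeasA A b (fun _ : Fin 1 => xbar) c y ε ∧ v = ∑ q, |ε q|} := by
    ext v
    simp only [Set.mem_smul_set, Set.mem_setOf_eq, smul_eq_mul]
    constructor
    · rintro ⟨c, y, ε, ⟨hA, hy, hε, hc⟩, rfl⟩
      refine ⟨|c ⬝ᵥ xbar - b ⬝ᵥ y|,
        ⟨c, y, fun _ => c ⬝ᵥ xbar - b ⬝ᵥ y, ⟨hA, hy, fun q => by ring, hc⟩,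
          by simp⟩, ?_⟩
      have h1 : ∀ q, b ⬝ᵥ y ≤ c ⬝ᵥ xhat q := fun q =>
        weak_dual hA hy (hfeasX q)
      rw [← sum_abs_sub hQ hxbar c _ h1]
      refine (Finset.sum_congr rfl fun q _ => ?_).symm
      rw [hε q]; ring_nf
    · rintro ⟨w, ⟨c, y, ε1, ⟨hA, hy, hε, hc⟩, rfl⟩, rfl⟩
      refine ⟨c, y, fun q => c ⬝ᵥ xhat q - b ⬝ᵥ y, ⟨hA, hy, fun q => by ring, hc⟩, ?_⟩
      have h1 : ∀ q, b ⬝ᵥ y ≤ c ⬝ᵥ xhat q := fun q =>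
        weak_dual hA hy (hfeasX q)
      rw [sum_abs_sub hQ hxbar c _ h1]
      have hε0 : ε1 0 = c ⬝ᵥ xbar - b ⬝ᵥ y := by
        have := hε 0; simp at this; linarith
      simp [hε0]
  rw [zA, zA, key, Real.sInf_smul_of_nonneg (by positivity), smul_eq_mul]

lemma zR_scale (hQ : 0 < Q) (hxbar : xbar = (Q : ℝ)⁻¹ • ∑ q, xhat q)
    (hfeasX : ∀ q i, b i ≤ A.mulVec (xhat q) i) :
    zR A b xhat = (Q : ℝ) * zR A b (fun _ : Fin 1 => xbar) := by
  have hQ' : (Q : ℝ) ≠ 0 := Nat.cast_ne_zero.2 hQ.ne'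
  have key : {v : ℝ | ∃ c y ε, FeasR A b xhat c y ε ∧ v = ∑ q, |ε q - 1|}
      = (Q : ℝ) • {v : ℝ | ∃ c y ε,
          FeasR A b (fun _ : Fin 1 => xbar) c y ε ∧ v = ∑ q, |ε q - 1|} := by
    ext v
    simp only [Set.mem_smul_set, Set.mem_setOf_eq, smul_eq_mul]
    constructor
    · rintro ⟨c, y, ε, ⟨hA, hy, hε, hc, h0⟩, rfl⟩
      have h1 : ∀ q, b ⬝ᵥ y ≤ c ⬝ᵥ xhat q := fun q =>
        weak_dual hA hy (hfeasX q)
      by_cases ht : b ⬝ᵥ y = 0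
      · -- all ε q = 1, objective 0
        have hcx : ∀ q, c ⬝ᵥ xhat q = 0 := fun q => by
          have := hε q; rw [ht, mul_zero] at this; exact this
        have hcb : c ⬝ᵥ xbar = 0 := by
          have h2 := (sum_dot hQ hxbar c).symm
          rw [show (∑ q, c ⬝ᵥ xhat q) = 0 from
            Finset.sum_eq_zero fun q _ => hcx q] at h2
          exact (mul_eq_zero.1 h2).resolve_left hQ'
        refine ⟨0, ⟨c, y, fun _ => 1,
          ⟨hA, hy, fun q => by simp [hcb, ht], hc, fun _ _ => rfl⟩, by simp⟩, ?_⟩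
        have : ∀ q, ε q = 1 := h0 ht
        simp [this]
      · -- ε q = c ⬝ᵥ xhat q / (b ⬝ᵥ y)
        refine ⟨|c ⬝ᵥ xbar - b ⬝ᵥ y| / |b ⬝ᵥ y|,
          ⟨c, y, fun _ => c ⬝ᵥ xbar / (b ⬝ᵥ y),
            ⟨hA, hy, fun q => by field_simp, hc, fun h => absurd h ht⟩, ?_⟩, ?_⟩
        · have hbar : b ⬝ᵥ y ≤ c ⬝ᵥ xbar := dot_xbar hQ hxbar c h1
          rw [Fin.sum_univ_one]
          rw [show c ⬝ᵥ xbar / (b ⬝ᵥ y) - 1 = (c ⬝ᵥ xbar - b ⬝ᵥ y) / (b ⬝ᵥ y) by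
            field_simp]
          rw [abs_div]
        · rw [← mul_div_assoc, ← sum_abs_sub hQ hxbar c _ h1, Finset.sum_div]
          refine Finset.sum_congr rfl fun q _ => ?_
          have hεq : ε q = c ⬝ᵥ xhat q / (b ⬝ᵥ y) := by
            field_simp
            linarith [hε q]
          rw [hεq, show c ⬝ᵥ xhat q / (b ⬝ᵥ y) - 1
              = (c ⬝ᵥ xhat q - b ⬝ᵥ y) / (b ⬝ᵥ y) by field_simp, abs_div]
    · rintro ⟨w, ⟨c, y, ε1, ⟨hA, hy, hε, hc, h0⟩, rfl⟩, rfl⟩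
      have h1 : ∀ q, b ⬝ᵥ y ≤ c ⬝ᵥ xhat q := fun q =>
        weak_dual hA hy (hfeasX q)
      by_cases ht : b ⬝ᵥ y = 0
      · have hε1 : ε1 0 = 1 := h0 ht 0
        have hcb : c ⬝ᵥ xbar = 0 := by
          have := hε 0; rw [ht, mul_zero] at this; exact this
        have hsum : ∑ q, c ⬝ᵥ xhat q = 0 := by
          rw [sum_dot hQ hxbar c, hcb, mul_zero]
        have hcx : ∀ q, c ⬝ᵥ xhat q = 0 := by
          intro q
          have := (Finset.sum_eq_zero_iff_of_nonneg
            (fun q _ => by have := h1 q; rw [ht] at this; exact this)).1 hsum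
          exact this q (Finset.mem_univ q)
        refine ⟨c, y, fun _ => 1,
          ⟨hA, hy, fun q => by simp [hcx q, ht], hc, fun _ _ => rfl⟩, ?_⟩
        simp [hε1]
      · have hε1 : ε1 0 = c ⬝ᵥ xbar / (b ⬝ᵥ y) := by
          have := hε 0; simp at this
          field_simp
          linarith
        refine ⟨c, y, fun q => c ⬝ᵥ xhat q / (b ⬝ᵥ y),
          ⟨hA, hy, fun q => by field_simp, hc, fun h => absurd h ht⟩, ?_⟩
        rw [Fin.sum_univ_one, hε1,
          show c ⬝ᵥ xbar / (b ⬝ᵥ y) - 1 = (c ⬝ᵥ xbar - b ⬝ᵥ y) / (b ⬝ᵥ y) by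
            field_simp, abs_div, ← mul_div_assoc, ← sum_abs_sub hQ hxbar c _ h1,
          Finset.sum_div]
        refine Finset.sum_congr rfl fun q _ => ?_
        rw [show c ⬝ᵥ xhat q / (b ⬝ᵥ y) - 1
            = (c ⬝ᵥ xhat q - b ⬝ᵥ y) / (b ⬝ᵥ y) by field_simp, abs_div]
  rw [zR, zR, key, Real.sInf_smul_of_nonneg (by positivity), smul_eq_mul]

lemma DA_scale (hQ : 0 < Q) (hxbar : xbar = (Q : ℝ)⁻¹ • ∑ q, xhat q)
    (hfeasX : ∀ q i, b i ≤ A.mulVec (xhat q) i) :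
    DA A b xhat = (Q : ℝ) * DA A b (fun _ : Fin 1 => xbar) := by
  have hterm : ∀ i : Fin m, ∑ q, |A i ⬝ᵥ xhat q - b i| / (∑ j, |A i j|)
      = (Q : ℝ) * (|A i ⬝ᵥ xbar - b i| / (∑ j, |A i j|)) := by
    intro i
    rw [← Finset.sum_div, sum_abs_sub hQ hxbar (A i) (b i) (fun q => hfeasX q i),
      mul_div_assoc]
  simp only [DA, Fin.sum_univ_one, hterm, ← Finset.mul_sum]
  ring

lemma DR_scale (hQ : 0 < Q) (hxbar : xbar = (Q : ℝ)⁻¹ • ∑ q, xhat q)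
    (hfeasX : ∀ q i, b i ≤ A.mulVec (xhat q) i) (hb : ∀ i, b i ≠ 0) :
    DR A b xhat = (Q : ℝ) * DR A b (fun _ : Fin 1 => xbar) := by
  have hrw : ∀ (i : Fin m) (x : Fin n → ℝ),
      |A i ⬝ᵥ x / b i - 1| = |A i ⬝ᵥ x - b i| / |b i| := by
    intro i x
    rw [show A i ⬝ᵥ x / b i - 1 = (A i ⬝ᵥ x - b i) / b i by
        field_simp [hb i], abs_div]
  have hterm : ∀ i : Fin m, ∑ q, |A i ⬝ᵥ xhat q / b i - 1|
      = (Q : ℝ) * |A i ⬝ᵥ xbar / b i - 1| := by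
    intro i
    simp only [hrw i]
    rw [← Finset.sum_div, sum_abs_sub hQ hxbar (A i) (b i) (fun q => hfeasX q i),
      mul_div_assoc]
  simp only [DR, Fin.sum_univ_one, hterm, ← Finset.mul_sum]
  ring

end Stmt16Aux

open Stmt16Aux in
theorem stmt_16
    (m n Q : ℕ) (hm : 0 < m) (hn : 0 < n) (hQ : 0 < Q)
    (A : Matrix (Fin m) (Fin n) ℝ) (b : Fin m → ℝ) (hb : b ≠ 0)
    (hrows : ∀ i, A i ≠ 0)
    (hPint : (interior {x : Fin n → ℝ | ∀ i, b i ≤ A.mulVec x i}).Nonempty)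
    -- all observed decisions are feasible: x̂_q ∈ P
    (xhat : Fin Q → Fin n → ℝ)
    (hfeasX : ∀ q i, b i ≤ A.mulVec (xhat q) i)
    -- the centroid x̄
    (xbar : Fin n → ℝ) (hxbar : xbar = (Q : ℝ)⁻¹ • ∑ q, xhat q)
    -- the denominators for the absolute model are positive
    (hDA : 0 < DA A b xhat) (hDA1 : 0 < DA A b (fun _ : Fin 1 => xbar)) :
    -- ρ_A(X̂) = ρ_A({x̄})
    1 - zA A b xhat / DA A b xhat =
      1 - zA A b (fun _ : Fin 1 => xbar) / DA A b (fun _ : Fin 1 => xbar) ∧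
    -- assuming additionally b_i ≠ 0 for all i (and positive denominators),
    -- ρ_R(X̂) = ρ_R({x̄})
    ((∀ i, b i ≠ 0) → 0 < DR A b xhat → 0 < DR A b (fun _ : Fin 1 => xbar) →
      1 - zR A b xhat / DR A b xhat =
        1 - zR A b (fun _ : Fin 1 => xbar) / DR A b (fun _ : Fin 1 => xbar)) := by
  have hbA := zA_scale hQ hxbar hfeasX
  have hbDA := DA_scale hQ hxbar hfeasX
  have hQ' : (Q : ℝ) ≠ 0 := Nat.cast_ne_zero.2 hQ.ne'
  constructor
  · rw [hbA, hbDA, mul_div_mul_left _ _ hQ']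
  · intro hbne _ _
    rw [zR_scale hQ hxbar hfeasX, DR_scale hQ hxbar hfeasX hbne,
      mul_div_mul_left _ _ hQ']
end

section
/- For every i ∈ I, the pair (c, y) = (a_i/‖a_i‖_1, e_i/‖a_i‖_1), together with ε_q = (a_iᵀ x̂_q − b_i)/‖a_i‖_1 for all q, is a feasible solution of GIO_A(X̂) with objective value Σ_{q=1}^Q |a_iᵀ x̂_q − b_i| / ‖a_i‖_1. Consequently, z_A*(X̂) ≤ D_A(X̂) and 0 ≤ ρ_A(X̂) ≤ 1. -/
open Matrix

/-
Each row `aᵢ` of `A`, scaled to unit `ℓ₁`-norm, is a feasible cost vector: it is `Aᵀ` applied to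
the scaled unit vector `eᵢ / ‖aᵢ‖₁ ≥ 0`, and its duality gap at `x̂_q` is the scaled slack
`(aᵢᵀ x̂_q − bᵢ) / ‖aᵢ‖₁`. Hence `z_A*` is at most every row's total scaled slack, so also at
most their average `D_A`; since `z_A* ≥ 0`, the coefficient `1 − z_A*/D_A` lies in `[0, 1]`.
-/

theorem sum_abs_pos_of_ne_zero {ι : Type*} [Fintype ι] {v : ι → ℝ} (hv : v ≠ 0) :
    0 < ∑ j, |v j| := by
  obtain ⟨j, hj⟩ := Function.ne_iff.mp hv
  exact Finset.sum_pos' (fun j _ => abs_nonneg (v j)) ⟨j, Finset.mem_univ j, abs_pos.mpr hj⟩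

theorem le_inv_card_mul_sum {m : ℕ} (hm : 0 < m) {f : Fin m → ℝ} {z : ℝ} (hz : ∀ i, z ≤ f i) :
    z ≤ (m : ℝ)⁻¹ * ∑ i, f i :=
  (le_inv_mul_iff₀ (by exact_mod_cast hm)).mpr <| by
    simpa using Finset.univ.card_nsmul_le_sum f z fun i _ => hz i

section GIO

variable {m n Q : ℕ} (A : Matrix (Fin m) (Fin n) ℝ) (b : Fin m → ℝ) (xhat : Fin Q → Fin n → ℝ)

theorem feasA_normalized_row (i : Fin m) (hrow : A i ≠ 0) :
    FeasA A b xhat ((∑ j, |A i j|)⁻¹ • A i)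
      ((∑ j, |A i j|)⁻¹ • (Pi.single i 1 : Fin m → ℝ))
      (fun q => (A i ⬝ᵥ xhat q - b i) / (∑ j, |A i j|)) := by
  have hs := sum_abs_pos_of_ne_zero hrow
  refine ⟨?_, fun k => ?_, fun q => ?_, ?_⟩
  · rw [mulVec_smul, mulVec_single_one]
    rfl
  · have he : (0 : Fin m → ℝ) ≤ Pi.single i 1 := Pi.single_nonneg.mpr zero_le_one
    exact smul_nonneg (inv_nonneg.mpr hs.le) (he k)
  · rw [smul_dotProduct, dotProduct_smul, dotProduct_single_one, smul_eq_mul, smul_eq_mul]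
    field_simp
    ring
  · simp only [Pi.smul_apply, smul_eq_mul, abs_mul, abs_inv, abs_of_pos hs, ← Finset.mul_sum]
    exact inv_mul_cancel₀ hs.ne'

theorem zA_nonneg : 0 ≤ zA A b xhat :=
  Real.sInf_nonneg fun _ ⟨_, _, _, _, hv⟩ => hv ▸ Finset.sum_nonneg fun _ _ => abs_nonneg _

theorem zA_le_of_feasA {c : Fin n → ℝ} {y : Fin m → ℝ} {ε : Fin Q → ℝ}
    (h : FeasA A b xhat c y ε) : zA A b xhat ≤ ∑ q, |ε q| :=
  csInf_le ⟨0, fun _ ⟨_, _, _, _, hv⟩ => hv ▸ Finset.sum_nonneg fun _ _ => abs_nonneg _⟩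
    ⟨c, y, ε, h, rfl⟩

end GIO

theorem stmt_17_general
    (m n Q : ℕ) (hm : 0 < m)
    (A : Matrix (Fin m) (Fin n) ℝ) (b : Fin m → ℝ)
    (hrows : ∀ i, A i ≠ 0)
    -- the data set X̂
    (xhat : Fin Q → Fin n → ℝ) :
    -- 1. each baseline candidate (a_i/‖a_i‖₁, e_i/‖a_i‖₁) is feasible with
    --    objective value Σ_q |a_iᵀ x̂_q − b_i| / ‖a_i‖₁
    (∀ i : Fin m,
      FeasA A b xhat ((∑ j, |A i j|)⁻¹ • A i)
        ((∑ j, |A i j|)⁻¹ • (Pi.single i 1 : Fin m → ℝ))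
        (fun q => (A i ⬝ᵥ xhat q - b i) / (∑ j, |A i j|)) ∧
      ∑ q, |(A i ⬝ᵥ xhat q - b i) / (∑ j, |A i j|)| =
        ∑ q, |A i ⬝ᵥ xhat q - b i| / (∑ j, |A i j|)) ∧
    -- 2. consequently z_A*(X̂) ≤ D_A(X̂) and 0 ≤ ρ_A(X̂) ≤ 1
    zA A b xhat ≤ DA A b xhat ∧
    0 ≤ 1 - zA A b xhat / DA A b xhat ∧
    1 - zA A b xhat / DA A b xhat ≤ 1 := by
  have hrow_value : ∀ i : Fin m, ∑ q, |(A i ⬝ᵥ xhat q - b i) / (∑ j, |A i j|)| =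
      ∑ q, |A i ⬝ᵥ xhat q - b i| / (∑ j, |A i j|) := fun i =>
    Finset.sum_congr rfl fun q _ => by rw [abs_div, abs_of_pos (sum_abs_pos_of_ne_zero (hrows i))]
  have hz_le_DA : zA A b xhat ≤ DA A b xhat := le_inv_card_mul_sum hm fun i =>
    hrow_value i ▸ zA_le_of_feasA A b xhat (feasA_normalized_row A b xhat i (hrows i))
  have hz_div_nonneg : 0 ≤ zA A b xhat / DA A b xhat :=
    div_nonneg (zA_nonneg A b xhat) ((zA_nonneg A b xhat).trans hz_le_DA)
  have hz_div_le_one : zA A b xhat / DA A b xhat ≤ 1 :=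
    div_le_one_of_le₀ hz_le_DA ((zA_nonneg A b xhat).trans hz_le_DA)
  exact ⟨fun i => ⟨feasA_normalized_row A b xhat i (hrows i), hrow_value i⟩, hz_le_DA,
    by linarith, by linarith⟩

theorem stmt_17
    (m n Q : ℕ) (hm : 0 < m) (hn : 0 < n) (hQ : 0 < Q)
    (A : Matrix (Fin m) (Fin n) ℝ) (b : Fin m → ℝ)
    (hrows : ∀ i, A i ≠ 0)
    (hPint : (interior {x : Fin n → ℝ | ∀ i, b i ≤ A.mulVec x i}).Nonempty)
    -- the data set X̂
    (xhat : Fin Q → Fin n → ℝ)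
    -- D_A(X̂) is assumed positive
    (hDA : 0 < DA A b xhat) :
    -- 1. each baseline candidate (a_i/‖a_i‖₁, e_i/‖a_i‖₁) is feasible with
    --    objective value Σ_q |a_iᵀ x̂_q − b_i| / ‖a_i‖₁
    (∀ i : Fin m,
      FeasA A b xhat ((∑ j, |A i j|)⁻¹ • A i)
        ((∑ j, |A i j|)⁻¹ • (Pi.single i 1 : Fin m → ℝ))
        (fun q => (A i ⬝ᵥ xhat q - b i) / (∑ j, |A i j|)) ∧
      ∑ q, |(A i ⬝ᵥ xhat q - b i) / (∑ j, |A i j|)| =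
        ∑ q, |A i ⬝ᵥ xhat q - b i| / (∑ j, |A i j|)) ∧
    -- 2. consequently z_A*(X̂) ≤ D_A(X̂) and 0 ≤ ρ_A(X̂) ≤ 1
    zA A b xhat ≤ DA A b xhat ∧
    0 ≤ 1 - zA A b xhat / DA A b xhat ∧
    1 - zA A b xhat / DA A b xhat ≤ 1 :=
  stmt_17_general m n Q hm A b hrows xhat
end
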